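/- arXiv:1301.1407 — 2 statements merged into one kernel-verified Lean document; each statement's English description precedes it below -/
import Mathlib

section
/- Let M be a compact Riemannian manifold without boundary, h : M → ℝ smooth negative, and for a constant K > 0 with Δ(-log(-h)) - K ≤ 0 on M, define φ₊ₛ = log((K - c(s))/(-s² h)) with c(s) = c₁ - c₂ s² and s large. Then φ₊ₛ is a supersolution: Δφ₊ₛ - c(s) + s² h e^{φ₊ₛ} ≤ 0 on M. -/
/-- With h smooth negative on a compact manifold, K > 0 with
Δ(-log(-h)) - K ≤ 0, c(s) = c₁ - c₂s² and s large, the function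
φ₊ₛ = log((K - c(s))/(-s²h)) is a supersolution:
Δφ₊ₛ - c(s) + s²·h·e^{φ₊ₛ} ≤ 0.  The Laplacian Δ is abstracted as an operator
that is invariant under adding constants. -/
theorem statement11 {M : Type*} [TopologicalSpace M]
    (Δ : (M → ℝ) → M → ℝ)
    (hΔshift : ∀ (u : M → ℝ) (a : ℝ), Δ (fun x => u x + a) = Δ u)
    (h : M → ℝ) (hneg : ∀ x, h x < 0)
    (c₁ c₂ K s : ℝ) (hc₂ : 0 < c₂) (hK : 0 < K) (hs : 0 < s)
    (hupp : ∀ x, Δ (fun y => -Real.log (-h y)) x - K ≤ 0)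
    (hlarge : 0 < K - (c₁ - c₂ * s ^ 2)) :
    ∀ x, Δ (fun y => Real.log ((K - (c₁ - c₂ * s ^ 2)) / (-(s ^ 2) * h y))) x
        - (c₁ - c₂ * s ^ 2)
        + s ^ 2 * h x *
          Real.exp (Real.log ((K - (c₁ - c₂ * s ^ 2)) / (-(s ^ 2) * h x))) ≤ 0 := by
  intro x
  set c : ℝ := c₁ - c₂ * s ^ 2 with hc
  have hs2 : (0:ℝ) < s ^ 2 := by positivity
  have hpos : ∀ y, 0 < (K - c) / (-(s ^ 2) * h y) := by
    intro y
    have : 0 < -(s ^ 2) * h y := by nlinarith [hneg y]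
    exact div_pos hlarge this
  -- rewrite the function inside Δ
  have hfun : (fun y => Real.log ((K - c) / (-(s ^ 2) * h y)))
      = fun y => -Real.log (-h y) + Real.log ((K - c) / s ^ 2) := by
    funext y
    have hhy : -h y ≠ 0 := by have := hneg y; linarith
    have h1 : (K - c) / (-(s ^ 2) * h y) = (K - c) / s ^ 2 * (-h y)⁻¹ := by
      field_simp
    rw [h1, Real.log_mul (by positivity) (inv_ne_zero hhy), Real.log_inv]
    ring
  have hΔeq : Δ (fun y => Real.log ((K - c) / (-(s ^ 2) * h y))) x
      = Δ (fun y => -Real.log (-h y)) x := by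
    rw [hfun, hΔshift]
  rw [hΔeq, Real.exp_log (hpos x)]
  have hx : -(s ^ 2) * h x ≠ 0 := by nlinarith [hneg x]
  have hhx : h x ≠ 0 := (hneg x).ne
  have hsne : s ≠ 0 := hs.ne'
  have : s ^ 2 * h x * ((K - c) / (-(s ^ 2) * h x)) = -(K - c) := by
    field_simp
  rw [this]
  have := hupp x
  linarith
end

section
/- Let M be a compact Riemannian manifold without boundary, h smooth negative on M, s > 0, and suppose φ, v are C² functions on M satisfying Δφ = c - s² h e^{φ} and Δv = c - s² h e^{v} + E for a continuous function E. Then for every x ∈ M, s²(e^{φ(x)} - e^{v(x)}) ≤ E(x_s) · e^{-v(x_s)} e^{v(x)} / (-h(x_s)), where x_s is a point where φ - v attains its maximum on M. -/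
/-- If Δφ = c - s²·h·e^φ and Δv = c - s²·h·e^v + E on a compact
manifold with h < 0, and x_s is a point where φ - v attains its maximum, then
for all x, s²(e^{φ(x)} - e^{v(x)}) ≤ E(x_s)·e^{-v(x_s)}·e^{v(x)}/(-h(x_s)).
The Laplace–Beltrami operator is abstracted by linearity and the maximum
principle at a global maximum. -/
theorem statement14 {M : Type*} [TopologicalSpace M] [CompactSpace M]
    (Δ : (M → ℝ) → M → ℝ)
    (hΔmax : ∀ u : M → ℝ, Continuous u → ∀ x₀ : M, (∀ x, u x ≤ u x₀) → Δ u x₀ ≤ 0)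
    (hΔsub : ∀ f g : M → ℝ, Δ (f - g) = Δ f - Δ g)
    (h : M → ℝ) (hh : Continuous h) (hneg : ∀ x, h x < 0)
    (c s : ℝ) (hs : 0 < s)
    (φ v E : M → ℝ) (hφ : Continuous φ) (hv : Continuous v) (hE : Continuous E)
    (heqφ : ∀ x, Δ φ x = c - s ^ 2 * h x * Real.exp (φ x))
    (heqv : ∀ x, Δ v x = c - s ^ 2 * h x * Real.exp (v x) + E x)
    (x_s : M) (hmax : ∀ x, φ x - v x ≤ φ x_s - v x_s) :
    ∀ x, s ^ 2 * (Real.exp (φ x) - Real.exp (v x)) ≤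
      E x_s * Real.exp (-(v x_s)) * Real.exp (v x) / (-h x_s) := by
  intro x
  have hmaxpr : ∀ y, (φ - v) y ≤ (φ - v) x_s := fun y => hmax y
  have hΔle : Δ (φ - v) x_s ≤ 0 :=
    hΔmax (φ - v) (hφ.sub hv) x_s hmaxpr
  rw [hΔsub] at hΔle
  simp only [Pi.sub_apply, heqφ, heqv] at hΔle
  -- hΔle : c - s^2*h x_s*exp(φ x_s) - (c - s^2*h x_s*exp(v x_s) + E x_s) ≤ 0
  have hnh : 0 < -h x_s := by linarith [hneg x_s]
  -- key : s^2 * (-h x_s) * (exp (φ x_s) - exp (v x_s)) ≤ E x_s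
  have key : s ^ 2 * (-h x_s) * (Real.exp (φ x_s) - Real.exp (v x_s)) ≤ E x_s := by
    nlinarith [hΔle]
  -- rewrite exp(φ x_s) = exp(φ x_s - v x_s) * exp(v x_s)
  have hexps : Real.exp (φ x_s) = Real.exp (φ x_s - v x_s) * Real.exp (v x_s) := by
    rw [← Real.exp_add]; ring_nf
  have hexpx : Real.exp (φ x) ≤ Real.exp (φ x_s - v x_s) * Real.exp (v x) := by
    rw [← Real.exp_add]
    exact Real.exp_le_exp.2 (by linarith [hmax x])
  have hvpos := Real.exp_pos (v x)
  have hvspos := Real.exp_pos (v x_s)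
  -- middle quantity
  have key2 : s ^ 2 * (Real.exp (φ x_s - v x_s) - 1) * Real.exp (v x_s) * (-h x_s)
      ≤ E x_s := by
    calc s ^ 2 * (Real.exp (φ x_s - v x_s) - 1) * Real.exp (v x_s) * (-h x_s)
        = s ^ 2 * (-h x_s) * (Real.exp (φ x_s) - Real.exp (v x_s)) := by
          rw [hexps]; ring
      _ ≤ E x_s := key
  have hinv : Real.exp (-(v x_s)) * Real.exp (v x_s) = 1 := by
    rw [← Real.exp_add]; simp
  have key3 : s ^ 2 * (Real.exp (φ x_s - v x_s) - 1) * (-h x_s)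
      ≤ E x_s * Real.exp (-(v x_s)) := by
    have hmul := mul_le_mul_of_nonneg_right key2 (Real.exp_pos (-(v x_s))).le
    calc s ^ 2 * (Real.exp (φ x_s - v x_s) - 1) * (-h x_s)
        = s ^ 2 * (Real.exp (φ x_s - v x_s) - 1) * Real.exp (v x_s) * (-h x_s) *
            Real.exp (-(v x_s)) := by
          rw [show s ^ 2 * (Real.exp (φ x_s - v x_s) - 1) * Real.exp (v x_s) * (-h x_s) *
              Real.exp (-(v x_s)) = s ^ 2 * (Real.exp (φ x_s - v x_s) - 1) * (-h x_s) *
              (Real.exp (-(v x_s)) * Real.exp (v x_s)) from by ring, hinv, mul_one]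
      _ ≤ E x_s * Real.exp (-(v x_s)) := hmul
  rw [le_div_iff₀ hnh]
  have hfinal : s ^ 2 * (Real.exp (φ x) - Real.exp (v x)) ≤
      s ^ 2 * (Real.exp (φ x_s - v x_s) - 1) * Real.exp (v x) := by
    nlinarith [hexpx, sq_nonneg s]
  nlinarith [key3, hfinal, hvpos, hnh]
end
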